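/- Let n = 2p+1, and for g : (0,∞) → ℝ let (Δg)(r) = g''(r) + ((n-1)/r)·g'(r). Then for all k ≥ 1, i ≥ 0, and r > 0: (I − Δ)^k ψ_i(r) = 2^k (p−i)(p−i−1)···(p−i−k+1) · ψ_{i+k}(r). In particular, if i ≤ p and i + k > p then (I − Δ)^k ψ_i = 0. -/

import Mathlib

/-!
Every `ψ_i` is smooth away from `0` with `ψ_i' = -r ψ_{i+1}`, and the `ψ_i` satisfy the
three-term recurrence `r² ψ_{i+2} = ψ_i + (2i+1) ψ_{i+1}` (true for `i = 0` by direct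
computation, and differentiating it at level `i` gives it at level `i+1`). Substituting both
into the radial Laplacian gives `(I − Δ) ψ_i = 2(p − i) ψ_{i+1}`, and iterating this, using that
`I − Δ` is local and commutes with scalars, gives the formula. The product vanishes once
`i + k > p ≥ i`, since it contains the factor `p − i − (p − i)`.
-/

open Set Filter Topology
open scoped ContDiff

/-- ψ₀(r) = e^{-r}, ψ_{i+1}(r) = -(1/r)·ψ_i'(r). -/
noncomputable def psi : ℕ → ℝ → ℝ
  | 0 => fun r => Real.exp (-r)
  | (i+1) => fun r => -(1/r) * deriv (psi i) r

/-- The operator (I − Δ), where Δ is the radial Laplacian on ℝⁿ, n = 2p+1. -/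
noncomputable def oneSubLaplacian (p : ℕ) (g : ℝ → ℝ) : ℝ → ℝ :=
  fun r => g r - (deriv (deriv g) r + ((2 * (p : ℝ) + 1 - 1) / r) * deriv g r)

theorem contDiffOn_psi (i : ℕ) : ContDiffOn ℝ ∞ (psi i) {0}ᶜ := by
  induction i with
  | zero => exact (Real.contDiff_exp.comp contDiff_neg).contDiffOn
  | succ i ih =>
    have h_inv : ContDiffOn ℝ ∞ (fun r : ℝ => -(1 / r)) {0}ᶜ :=
      (contDiffOn_const.div contDiffOn_id fun _ hr => hr).neg
    exact h_inv.mul (ih.deriv_of_isOpen isOpen_compl_singleton le_rfl)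

theorem hasDerivAt_psi (i : ℕ) {r : ℝ} (hr : r ≠ 0) :
    HasDerivAt (psi i) (-r * psi (i + 1) r) r := by
  have h_diff : DifferentiableAt ℝ (psi i) r :=
    ((contDiffOn_psi i).contDiffAt (isOpen_compl_singleton.mem_nhds hr)).differentiableAt
      (by simp)
  have h_psi : -r * psi (i + 1) r = deriv (psi i) r := by
    change -r * (-(1 / r) * deriv (psi i) r) = _
    field_simp
  exact h_psi ▸ h_diff.hasDerivAt

theorem deriv_psi (i : ℕ) {r : ℝ} (hr : r ≠ 0) : deriv (psi i) r = -r * psi (i + 1) r :=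
  (hasDerivAt_psi i hr).deriv

theorem deriv_deriv_psi (i : ℕ) {r : ℝ} (hr : r ≠ 0) :
    deriv (deriv (psi i)) r = -psi (i + 1) r + r ^ 2 * psi (i + 2) r := by
  have h_eq : deriv (psi i) =ᶠ[𝓝 r] fun s => -s * psi (i + 1) s :=
    eventually_ne_nhds hr |>.mono fun _ hs => deriv_psi i hs
  have h_deriv : HasDerivAt (fun s => -s * psi (i + 1) s)
      (-1 * psi (i + 1) r + -r * (-r * psi (i + 2) r)) r :=
    (hasDerivAt_neg r).mul (hasDerivAt_psi (i + 1) hr)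
  rw [h_eq.deriv_eq, h_deriv.deriv]
  ring

theorem deriv_psi_zero : deriv (psi 0) = -psi 0 := by
  funext r
  exact ((hasDerivAt_neg r).exp).deriv.trans (by simp [psi])

theorem sq_mul_psi_add_two (i : ℕ) {r : ℝ} (hr : r ≠ 0) :
    r ^ 2 * psi (i + 2) r = psi i r + (2 * i + 1) * psi (i + 1) r := by
  induction i generalizing r with
  | zero =>
    have h := deriv_deriv_psi 0 hr
    rw [deriv_psi_zero, deriv.neg', deriv_psi_zero] at h
    simp only [Pi.neg_apply, neg_neg] at h
    push_cast
    linarith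
  | succ i ih =>
    have h_eq : (fun s : ℝ => s ^ 2 * psi (i + 2) s) =ᶠ[𝓝 r]
        fun s => psi i s + (2 * i + 1) * psi (i + 1) s :=
      eventually_ne_nhds hr |>.mono fun _ hs => ih hs
    have h_lhs := (hasDerivAt_pow 2 r).mul (hasDerivAt_psi (i + 2) hr)
    have h_rhs := (hasDerivAt_psi i hr).add
      ((hasDerivAt_psi (i + 1) hr).const_mul (2 * (i : ℝ) + 1))
    have h_derivs := (h_rhs.congr_of_eventuallyEq h_eq).unique h_lhs
    have h_cancel : r * (r ^ 2 * psi (i + 3) r) =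
        r * (psi (i + 1) r + (2 * (i + 1 : ℕ) + 1) * psi (i + 2) r) := by
      push_cast
      linear_combination h_derivs
    exact mul_left_cancel₀ hr h_cancel

theorem oneSubLaplacian_psi (p i : ℕ) {r : ℝ} (hr : r ≠ 0) :
    oneSubLaplacian p (psi i) r = 2 * ((p : ℝ) - i) * psi (i + 1) r := by
  simp only [oneSubLaplacian]
  rw [deriv_deriv_psi i hr, deriv_psi i hr, sq_mul_psi_add_two i hr]
  field_simp
  ring

theorem oneSubLaplacian_const_mul (p : ℕ) (c : ℝ) (g : ℝ → ℝ) (r : ℝ) :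
    oneSubLaplacian p (fun s => c * g s) r = c * oneSubLaplacian p g r := by
  simp only [oneSubLaplacian, deriv_const_mul_field']
  ring

theorem oneSubLaplacian_congr_of_eventuallyEq (p : ℕ) {g h : ℝ → ℝ} {r : ℝ}
    (hgh : g =ᶠ[𝓝 r] h) : oneSubLaplacian p g r = oneSubLaplacian p h r := by
  simp only [oneSubLaplacian]
  rw [hgh.deriv_eq, hgh.deriv.deriv_eq, hgh.eq_of_nhds]

theorem iterate_oneSubLaplacian_psi (p i k : ℕ) {r : ℝ} (hr : r ≠ 0) :
    (oneSubLaplacian p)^[k] (psi i) r =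
      2 ^ k * (∏ ℓ ∈ Finset.range k, ((p : ℝ) - i - ℓ)) * psi (i + k) r := by
  induction k generalizing r with
  | zero => simp
  | succ k ih =>
    have h_eq : (oneSubLaplacian p)^[k] (psi i) =ᶠ[𝓝 r]
        fun s => (2 ^ k * ∏ ℓ ∈ Finset.range k, ((p : ℝ) - i - ℓ)) * psi (i + k) s :=
      eventually_ne_nhds hr |>.mono fun _ hs => ih hs
    rw [Function.iterate_succ_apply', oneSubLaplacian_congr_of_eventuallyEq p h_eq,
      oneSubLaplacian_const_mul, oneSubLaplacian_psi p (i + k) hr, Finset.prod_range_succ,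
      ← add_assoc]
    push_cast
    ring

theorem one_sub_laplacian_pow_psi_general (p i k : ℕ) :
    (∀ r : ℝ, 0 < r →
      (oneSubLaplacian p)^[k] (psi i) r =
        2 ^ k * (∏ ℓ ∈ Finset.range k, ((p : ℝ) - i - ℓ)) * psi (i+k) r) ∧
    (i ≤ p → p < i + k → ∀ r : ℝ, 0 < r → (oneSubLaplacian p)^[k] (psi i) r = 0) := by
  refine ⟨fun r hr => iterate_oneSubLaplacian_psi p i k hr.ne', fun hip hpk r hr => ?_⟩
  have h_prod : ∏ ℓ ∈ Finset.range k, ((p : ℝ) - i - ℓ) = 0 :=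
    Finset.prod_eq_zero (i := p - i) (Finset.mem_range.mpr (by omega))
      (by rw [Nat.cast_sub hip]; ring)
  rw [iterate_oneSubLaplacian_psi p i k hr.ne', h_prod]
  ring

theorem one_sub_laplacian_pow_psi (p i k : ℕ) (hk : 1 ≤ k) :
    (∀ r : ℝ, 0 < r →
      (oneSubLaplacian p)^[k] (psi i) r =
        2 ^ k * (∏ ℓ ∈ Finset.range k, ((p : ℝ) - i - ℓ)) * psi (i+k) r) ∧
    (i ≤ p → p < i + k → ∀ r : ℝ, 0 < r → (oneSubLaplacian p)^[k] (psi i) r = 0) :=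
  one_sub_laplacian_pow_psi_general p i k
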